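/- arXiv:2309.01594 — 2 statements merged into one kernel-verified Lean document; each statement's English description precedes it below -/
import Mathlib

section
/- Let (Ω^{p,q}, d_h, d_v) be a truncated bicomplex of real vector spaces and suppose that for every p ≥ 2 there is a homotopy operator P for the row p. Let λ ∈ Ω^{0,m} and ω₁ ∈ Ω^{1,m−1} satisfy d_v λ + d_h ω₁ = 0, and define recursively ω_{p+1} = −P(d_v ω_p) ∈ Ω^{p+1,m−p−1} for 1 ≤ p ≤ m−1. If the map d_h : Ω^{m+1,0} → Ω^{m+1,1} is injective, then d_v ω_p + d_h ω_{p+1} = 0 for all 1 ≤ p ≤ m−1 and d_v ω_m = 0; equivalently, every bidegree component of the total differential (d_h + d_v) of θ^F = λ + ω₁ + ⋯ + ω_m that lies in contact degree ≥ 2 vanishes, so that together with the hypothesis d_v λ + d_h ω₁ = 0 the form θ^F is closed. (This is the algebraic content of the paper's Theorems 1 and 2: a Lepage equivalent extended by a homotopy operator for the horizontal differential satisfies the closure property.) -/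
/-- the closure property of a Lepage equivalent extended by a homotopy operator
for the horizontal differential (the algebraic content of Theorems 1 and 2 of the paper).

We model the truncated variational bicomplex with `m = n + 1 ≥ 1`: real vector spaces
`Ω p q` (only the range `q ≤ m` matters; the horizontal differential `dh` is only defined
for `q < m`, as witnessed by the proof argument), a vertical differential `dv`, with
`dh ∘ dh = 0`, `dv ∘ dv = 0` and `dh ∘ dv + dv ∘ dh = 0` whenever defined.  For every row
`p ≥ 2` there is a homotopy operator `P p q : Ω p (q+1) → Ω p q` (for `q + 1 ≤ m`) with
`dh ∘ P + P ∘ dh = id` on `Ω p q` for `1 ≤ q ≤ m − 1`.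

The form `ω p q` (with `p + q = n`, so living in `Ω (p+1) q`) plays the rôle of
`ω_{p+1} ∈ Ω^{p+1, m−(p+1)}`; thus `λ ∈ Ω^{0,m}` and `ω₁ = ω 0 n ∈ Ω^{1,m−1}` satisfy
`d_v λ + d_h ω₁ = 0`, and `ω_{p+1} = −P (d_v ω_p)` recursively.  Assuming that
`d_h : Ω^{m+1,0} → Ω^{m+1,1}` is injective, the conclusion is that
`d_v ω_p + d_h ω_{p+1} = 0` for all `1 ≤ p ≤ m − 1` and `d_v ω_m = 0`: every bidegree
component of `(d_h + d_v) θ^F` lying in contact degree `≥ 2` vanishes, so that together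
with `d_v λ + d_h ω₁ = 0` the form `θ^F = λ + ω₁ + ⋯ + ω_m` is closed. -/
theorem lepage_extension_closure_property
    (n : ℕ)
    (Ω : ℕ → ℕ → Type) [∀ p q, AddCommGroup (Ω p q)] [∀ p q, Module ℝ (Ω p q)]
    (dh : ∀ p q, q < n + 1 → (Ω p q →ₗ[ℝ] Ω p (q + 1)))
    (dv : ∀ p q, Ω p q →ₗ[ℝ] Ω (p + 1) q)
    (hdhdh : ∀ p q (h1 : q < n + 1) (h2 : q + 1 < n + 1) (x : Ω p q),
      dh p (q + 1) h2 (dh p q h1 x) = 0)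
    (hdvdv : ∀ p q (x : Ω p q), dv (p + 1) q (dv p q x) = 0)
    (hdhdv : ∀ p q (h : q < n + 1) (x : Ω p q),
      dh (p + 1) q h (dv p q x) + dv p (q + 1) (dh p q h x) = 0)
    (P : ∀ p q, 2 ≤ p → q < n + 1 → (Ω p (q + 1) →ₗ[ℝ] Ω p q))
    (hP : ∀ p q (hp : 2 ≤ p) (h1 : q < n + 1) (h2 : q + 1 < n + 1) (x : Ω p (q + 1)),
      dh p q h1 (P p q hp h1 x) + P p (q + 1) hp h2 (dh p (q + 1) h2 x) = x)
    (hinj : Function.Injective (dh (n + 2) 0 (by omega)))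
    (lam : Ω 0 (n + 1))
    (ω : ∀ p q, p + q = n → Ω (p + 1) q)
    (hstart : dv 0 (n + 1) lam + dh 1 n (by omega) (ω 0 n (by omega)) = 0)
    (hrec : ∀ p q (h : p + (q + 1) = n),
      ω (p + 1) q (by omega) =
        - P (p + 2) q (by omega) (by omega)
            (dv (p + 1) (q + 1) (ω p (q + 1) (by omega)))) :
    (∀ p q (h : p + (q + 1) = n),
      dv (p + 1) (q + 1) (ω p (q + 1) (by omega)) +
        dh (p + 2) q (by omega) (ω (p + 1) q (by omega)) = 0) ∧
    dv (n + 1) 0 (ω n 0 (by omega)) = 0 := by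

  -- Key claim: d_h (d_v ω_p) = 0 for all p.
  have H : ∀ p q (h : p + q = n),
      dh (p + 2) q (by omega) (dv (p + 1) q (ω p q h)) = 0 := by
    intro p
    induction p with
    | zero =>
      intro q h
      obtain rfl : n = q := by omega
      have hb : dh 1 n (by omega) (ω 0 n h) = - dv 0 (n + 1) lam := by
        exact (neg_eq_of_add_eq_zero_right hstart).symm
      have h3 := hdhdv 1 n (by omega) (ω 0 n h)
      have h4 : dh 2 n (by omega) (dv 1 n (ω 0 n h))
          = - dv 1 (n + 1) (dh 1 n (by omega) (ω 0 n h)) :=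
        eq_neg_of_add_eq_zero_left h3
      rw [h4, hb, map_neg, neg_neg, hdvdv]
    | succ p ih =>
      intro q h
      have h' : p + (q + 1) = n := by omega
      have hr := hrec p q h'
      have hdu : dh (p + 2) (q + 1) (by omega)
          (dv (p + 1) (q + 1) (ω p (q + 1) h')) = 0 := ih (q + 1) h'
      have hPeq := hP (p + 2) q (by omega) (by omega) (by omega)
        (dv (p + 1) (q + 1) (ω p (q + 1) h'))
      rw [hdu, map_zero, add_zero] at hPeq
      have hdω : dh (p + 2) q (by omega) (ω (p + 1) q h)
          = - dv (p + 1) (q + 1) (ω p (q + 1) h') := by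
        rw [show ω (p + 1) q h = ω (p + 1) q (by omega) from rfl, hr, map_neg, hPeq]
      have h3 := hdhdv (p + 2) q (by omega) (ω (p + 1) q h)
      have h4 : dh (p + 3) q (by omega) (dv (p + 2) q (ω (p + 1) q h))
          = - dv (p + 2) (q + 1) (dh (p + 2) q (by omega) (ω (p + 1) q h)) :=
        eq_neg_of_add_eq_zero_left h3
      rw [h4, hdω, map_neg, hdvdv, neg_zero, neg_zero]
  constructor
  · intro p q h
    have hr := hrec p q h
    have hdu : dh (p + 2) (q + 1) (by omega)
        (dv (p + 1) (q + 1) (ω p (q + 1) (by omega))) = 0 := H p (q + 1) (by omega)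
    have hPeq := hP (p + 2) q (by omega) (by omega) (by omega)
      (dv (p + 1) (q + 1) (ω p (q + 1) (by omega)))
    rw [hdu, map_zero, add_zero] at hPeq
    rw [hr, map_neg, hPeq, add_neg_cancel]
  · apply hinj
    rw [map_zero]
    exact H n 0 (by omega)
end

section
/- Let m ≥ 1, let I : Fin m → ℕ be a multi-index, and let p ∈ ℕ. Then, as an identity of rational numbers, the sum over all multi-indices K with K ≤ I (pointwise) of (−1)^{|K|} · I! / ((|K| + p + 1) · K! · (I − K)!) equals p! · |I|! / (|I| + p + 1)!. (This is the weighted-sum-of-binomial-coefficients identity used in the paper to show that the homotopy-operator construction λ − P d_v λ reproduces the principal Lepage equivalent.) -/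


noncomputable def S (n p : ℕ) : ℚ :=
  ∑ k ∈ Finset.range (n+1), (-1:ℚ)^k * (n.choose k) / ((k:ℚ) + p + 1)

lemma S_succ (n p : ℕ) : S (n+1) p = S n p - S n (p+1) := by
  have h2 : ∑ k ∈ Finset.range (n+1),
        (-1:ℚ)^(k+1) * (n.choose (k+1)) / (((k+1:ℕ):ℚ) + p + 1)
      = S n p - 1/((p:ℚ)+1) := by
    have e1 := Finset.sum_range_succ'
      (fun k => (-1:ℚ)^k * (n.choose k) / ((k:ℚ) + p + 1)) (n+1)
    have e2 := Finset.sum_range_succ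
      (fun k => (-1:ℚ)^k * (n.choose k) / ((k:ℚ) + p + 1)) (n+1)
    simp only [Nat.choose_succ_self, Nat.cast_zero, Nat.choose_zero_right,
      Nat.cast_one, pow_zero, one_mul, zero_add, mul_zero, zero_mul, zero_div,
      add_zero] at e1 e2
    unfold S
    rw [e2] at e1
    push_cast at e1 ⊢
    linarith [e1]
  unfold S
  rw [Finset.sum_range_succ'
      (fun k => (-1:ℚ)^k * ((n+1).choose k) / ((k:ℚ) + p + 1)) (n+1)]
  have hsplit : ∀ k ∈ Finset.range (n+1),
      (-1:ℚ)^(k+1) * (((n+1).choose (k+1) : ℕ) : ℚ) / (((k+1:ℕ):ℚ) + p + 1)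
      = (-(-1:ℚ)^k * (n.choose k) / ((k:ℚ) + (p+1:ℕ) + 1))
        + (-1:ℚ)^(k+1) * (n.choose (k+1)) / (((k+1:ℕ):ℚ) + p + 1) := by
    intro k _
    rw [Nat.choose_succ_succ]
    push_cast
    ring
  rw [Finset.sum_congr rfl hsplit, Finset.sum_add_distrib, h2]
  have h3 : ∑ k ∈ Finset.range (n+1), (-(-1:ℚ)^k * (n.choose k) / ((k:ℚ) + (p+1:ℕ) + 1))
      = - S n (p+1) := by
    unfold S
    rw [← Finset.sum_neg_distrib]
    apply Finset.sum_congr rfl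
    intro k _
    push_cast
    ring
  rw [h3]
  simp only [pow_zero, Nat.choose_zero_right, Nat.cast_one, one_mul, Nat.cast_zero, zero_add]
  unfold S
  ring

lemma lemA (n : ℕ) : ∀ p : ℕ, S n p = (p.factorial * n.factorial) / ((n+p+1).factorial) := by
  induction n with
  | zero =>
    intro p
    have h1 : ((p+1).factorial : ℚ) = ((p:ℚ)+1) * p.factorial := by
      push_cast [Nat.factorial_succ]; ring
    have hp : ((p:ℚ)+1) ≠ 0 := by positivity
    have hf : (p.factorial : ℚ) ≠ 0 := by positivity
    simp only [S, zero_add, Finset.sum_range_one, Nat.choose_zero_right, Nat.cast_one, pow_zero,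
      one_mul, Nat.factorial_zero, Nat.cast_zero, mul_one, h1]
    field_simp
  | succ n ih =>
    intro p
    rw [S_succ, ih p, ih (p+1)]
    have e1 : (((n+1+p+1).factorial : ℕ) : ℚ) = ((n:ℚ)+p+2) * (n+p+1).factorial := by
      have : n+1+p+1 = (n+p+1)+1 := by ring
      rw [this, Nat.factorial_succ]; push_cast; ring
    have e2 : (((n+(p+1)+1).factorial : ℕ) : ℚ) = ((n:ℚ)+p+2) * (n+p+1).factorial := by
      have : n+(p+1)+1 = (n+p+1)+1 := by ring
      rw [this, Nat.factorial_succ]; push_cast; ring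
    have e3 : (((p+1).factorial : ℕ) : ℚ) = ((p:ℚ)+1) * p.factorial := by
      rw [Nat.factorial_succ]; push_cast; ring
    have e4 : (((n+1).factorial : ℕ) : ℚ) = ((n:ℚ)+1) * n.factorial := by
      rw [Nat.factorial_succ]; push_cast; ring
    rw [e1, e2, e3, e4]
    have h1 : ((n:ℚ)+p+2) ≠ 0 := by positivity
    have h2 : ((n+p+1).factorial : ℚ) ≠ 0 := by positivity
    have h3 : ((n+p+1:ℕ):ℚ) + 1 ≠ 0 := by positivity
    field_simp
    ring

lemma vandermonde (m : ℕ) (I : Fin m → ℕ) (k : ℕ) :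
    ∑ K ∈ (Finset.Iic I).filter (fun K => ∑ i, K i = k),
        ∏ i, ((I i).choose (K i) : ℚ)
      = ((∑ i, I i).choose k : ℚ) := by
  classical
  have hdom : Finset.Iic I = Fintype.piFinset fun i => Finset.range (I i + 1) := by
    ext K
    simp [Fintype.mem_piFinset, Finset.mem_Iic, Pi.le_def, Nat.lt_succ_iff]
  have expand : ∀ i : Fin m, (Polynomial.X + 1 : Polynomial ℚ) ^ (I i)
      = ∑ j ∈ Finset.range (I i + 1),
          Polynomial.C (((I i).choose j : ℕ) : ℚ) * Polynomial.X ^ j := by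
    intro i
    rw [add_pow]
    apply Finset.sum_congr rfl
    intro j _
    rw [one_pow, Polynomial.C_eq_natCast]
    push_cast
    ring
  have hpoly : ((Polynomial.X + 1 : Polynomial ℚ)) ^ (∑ i, I i)
      = ∑ K ∈ Fintype.piFinset (fun i => Finset.range (I i + 1)),
          Polynomial.C (∏ i, (((I i).choose (K i) : ℕ) : ℚ)) * Polynomial.X ^ (∑ i, K i) := by
    rw [← Finset.prod_pow_eq_pow_sum]
    rw [Finset.prod_congr rfl (fun i _ => expand i), Finset.prod_univ_sum]
    apply Finset.sum_congr rfl
    intro K _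
    rw [Finset.prod_mul_distrib, Finset.prod_pow_eq_pow_sum, ← map_prod]
  have hco := congrArg (fun P => Polynomial.coeff P k) hpoly
  simp only [Polynomial.coeff_X_add_one_pow, Polynomial.finset_sum_coeff,
    Polynomial.coeff_C_mul, Polynomial.coeff_X_pow] at hco
  rw [hdom, Finset.sum_filter, hco]
  apply Finset.sum_congr rfl
  intro K _
  by_cases h : ∑ i, K i = k
  · simp [h]
  · have hne : ¬ (k = ∑ i, K i) := fun hh => h hh.symm
    rw [if_neg hne, mul_zero, if_neg h]

/-- the weighted-sum-of-binomial-coefficients identity: for a multi-index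
`I : Fin m → ℕ` (with `m ≥ 1`) and `p : ℕ`,
`∑_{K ≤ I} (−1)^{|K|} · I! / ((|K|+p+1) · K! · (I−K)!) = p! · |I|! / (|I|+p+1)!` in `ℚ`. -/
theorem multiindex_weighted_binomial_sum (m : ℕ) (hm : 1 ≤ m) (I : Fin m → ℕ) (p : ℕ) :
    ∑ K ∈ Finset.Iic I,
      ((-1 : ℚ) ^ (∑ i, K i) * ((∏ i, (I i).factorial : ℕ) : ℚ)) /
        ((((∑ i, K i) + p + 1 : ℕ) : ℚ) * ((∏ i, (K i).factorial : ℕ) : ℚ) *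
          ((∏ i, (I i - K i).factorial : ℕ) : ℚ)) =
    ((p.factorial : ℚ) * (((∑ i, I i).factorial : ℕ) : ℚ)) /
      ((((∑ i, I i) + p + 1).factorial : ℕ) : ℚ) := by
  classical
  have hterm : ∀ K ∈ Finset.Iic I,
      ((-1 : ℚ) ^ (∑ i, K i) * ((∏ i, (I i).factorial : ℕ) : ℚ)) /
        ((((∑ i, K i) + p + 1 : ℕ) : ℚ) * ((∏ i, (K i).factorial : ℕ) : ℚ) *
          ((∏ i, (I i - K i).factorial : ℕ) : ℚ))
      = ((-1 : ℚ) ^ (∑ i, K i) / (((∑ i, K i) + p + 1 : ℕ) : ℚ)) *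
          ∏ i, (((I i).choose (K i) : ℕ) : ℚ) := by
    intro K hK
    have hKI : ∀ i, K i ≤ I i := Finset.mem_Iic.mp hK
    have hc : ∀ i : Fin m, (((I i).choose (K i) : ℕ) : ℚ)
        = ((I i).factorial : ℚ) / (((K i).factorial : ℚ) * ((I i - K i).factorial : ℚ)) :=
      fun i => Nat.cast_choose ℚ (hKI i)
    rw [Finset.prod_congr rfl (fun i _ => hc i)]
    rw [Finset.prod_div_distrib, Finset.prod_mul_distrib]
    have hd : ((((∑ i, K i) + p + 1 : ℕ) : ℚ)) ≠ 0 := by positivity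
    have hb : (∏ i, ((K i).factorial : ℚ)) ≠ 0 :=
      Finset.prod_ne_zero_iff.mpr fun i _ => by positivity
    have hc2 : (∏ i, ((I i - K i).factorial : ℚ)) ≠ 0 :=
      Finset.prod_ne_zero_iff.mpr fun i _ => by positivity
    push_cast
    field_simp
  rw [Finset.sum_congr rfl hterm]
  have hmaps : ∀ K ∈ Finset.Iic I, (∑ i, K i) ∈ Finset.range ((∑ i, I i) + 1) := by
    intro K hK
    have hKI : ∀ i, K i ≤ I i := Finset.mem_Iic.mp hK
    exact Finset.mem_range.mpr (Nat.lt_succ_of_le (Finset.sum_le_sum fun i _ => hKI i))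
  rw [← Finset.sum_fiberwise_of_maps_to hmaps]
  have hfib : ∀ j ∈ Finset.range ((∑ i, I i) + 1),
      ∑ K ∈ (Finset.Iic I).filter (fun K => ∑ i, K i = j),
        ((-1 : ℚ) ^ (∑ i, K i) / (((∑ i, K i) + p + 1 : ℕ) : ℚ)) *
          ∏ i, (((I i).choose (K i) : ℕ) : ℚ)
      = ((-1 : ℚ) ^ j / ((j + p + 1 : ℕ) : ℚ)) * ((∑ i, I i).choose j : ℚ) := by
    intro j _
    rw [← vandermonde m I j, Finset.mul_sum]
    apply Finset.sum_congr rfl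
    intro K hK
    rw [(Finset.mem_filter.mp hK).2]
  rw [Finset.sum_congr rfl hfib]
  have := lemA (∑ i, I i) p
  unfold S at this
  rw [← this]
  apply Finset.sum_congr rfl
  intro j _
  push_cast
  ring
end
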